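/- arXiv:1902.04330 — 3 statements merged into one kernel-verified Lean document; each statement's English description precedes it below -/
import Mathlib

section
/- Fix n ≥ 1, distinct points ζ₁,…,ζₙ on the unit circle, and positive reals c₁,…,cₙ. Let F(t) = Σ_{k=1}^n cₖ · 2ζₖ/(ζₖ − t)². Then F has no zeros on the unit circle. -/
/-! On the unit circle `conj w = w⁻¹`, so for `‖z‖ = ‖t‖ = 1` one has
`|z - t|² = (z - t) (z⁻¹ - t⁻¹) = -(z - t)² / (z t)`. Hence every term of `t F(t)` equals
`-2 cₖ / |ζₖ - t|²`: a negative real number, and so is their sum. -/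

open Complex Finset

lemma normSq_sub_of_norm_eq_one {z t : ℂ} (hz : ‖z‖ = 1) (ht : ‖t‖ = 1) :
    (normSq (z - t) : ℂ) = -(z - t) ^ 2 / (z * t) := by
  have hz0 : z ≠ 0 := by rintro rfl; simp at hz
  have ht0 : t ≠ 0 := by rintro rfl; simp at ht
  rw [← mul_conj, map_sub, ← inv_eq_conj hz, ← inv_eq_conj ht]
  field_simp
  ring

lemma mul_div_sub_sq_of_norm_eq_one {z t : ℂ} (hz : ‖z‖ = 1) (ht : ‖t‖ = 1) (hne : z ≠ t) :
    t * (z / (z - t) ^ 2) = -((normSq (z - t))⁻¹ : ℝ) := by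
  have hzt : z - t ≠ 0 := sub_ne_zero.mpr hne
  have hz0 : z ≠ 0 := by rintro rfl; simp at hz
  push_cast
  rw [normSq_sub_of_norm_eq_one hz ht]
  field_simp

lemma mul_sum_poisson_deriv_eq {ι : Type*} (s : Finset ι) {ζ : ι → ℂ} (hζ : ∀ k, ‖ζ k‖ = 1)
    (c : ι → ℝ) {t : ℂ} (ht : ‖t‖ = 1) (hne : ∀ k, t ≠ ζ k) :
    t * ∑ k ∈ s, (c k : ℂ) * (2 * ζ k) / (ζ k - t) ^ 2
      = ((-∑ k ∈ s, 2 * c k / normSq (ζ k - t) : ℝ) : ℂ) := by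
  rw [mul_sum]
  push_cast
  rw [← sum_neg_distrib]
  refine sum_congr rfl fun k _ => ?_
  have hk := mul_div_sub_sq_of_norm_eq_one (hζ k) ht (hne k).symm
  push_cast at hk
  calc t * ((c k : ℂ) * (2 * ζ k) / (ζ k - t) ^ 2)
      = 2 * (c k : ℂ) * (t * (ζ k / (ζ k - t) ^ 2)) := by ring
    _ = -(2 * (c k : ℂ) / (normSq (ζ k - t) : ℂ)) := by rw [hk]; ring

theorem sum_poisson_deriv_no_zeros_on_circle_general
    (n : ℕ) (hn : 1 ≤ n)
    (ζ : Fin n → ℂ) (hζ : ∀ k, ‖ζ k‖ = 1)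
    (c : Fin n → ℝ) (hc : ∀ k, 0 < c k)
    (F : ℂ → ℂ)
    (hF : ∀ t : ℂ, F t = ∑ k, (c k : ℂ) * (2 * ζ k) / (ζ k - t) ^ 2) :
    ∀ t : ℂ, ‖t‖ = 1 → (∀ k, t ≠ ζ k) → F t ≠ 0 := by
  intro t ht hne hF0
  have hpos : 0 < ∑ k, 2 * c k / normSq (ζ k - t) :=
    sum_pos (fun k _ => div_pos (mul_pos two_pos (hc k))
        (normSq_pos.mpr (sub_ne_zero.mpr (hne k).symm)))
      (univ_nonempty_iff.mpr ⟨⟨0, hn⟩⟩)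
  have h := mul_sum_poisson_deriv_eq univ hζ c ht hne
  rw [← hF, hF0, mul_zero] at h
  have h0 : -∑ k, 2 * c k / normSq (ζ k - t) = 0 := by exact_mod_cast h.symm
  linarith

theorem sum_poisson_deriv_no_zeros_on_circle
    (n : ℕ) (hn : 1 ≤ n)
    (ζ : Fin n → ℂ) (hζ : ∀ k, ‖ζ k‖ = 1)
    (hdist : Function.Injective ζ)
    (c : Fin n → ℝ) (hc : ∀ k, 0 < c k)
    (F : ℂ → ℂ)
    (hF : ∀ t : ℂ, F t = ∑ k, (c k : ℂ) * (2 * ζ k) / (ζ k - t) ^ 2) :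
    ∀ t : ℂ, ‖t‖ = 1 → (∀ k, t ≠ ζ k) → F t ≠ 0 :=
  sum_poisson_deriv_no_zeros_on_circle_general n hn ζ hζ c hc F hF
end

section
/- Fix n ≥ 1, distinct points ζ₁,…,ζₙ on the unit circle, and positive reals c₁,…,cₙ. Let F(t) = Σ_{k=1}^n cₖ · 2ζₖ/(ζₖ − t)². If t₀ ∈ ℂ with t₀ ≠ 0 and F(t₀) = 0, then F(1/conj(t₀)) = 0; that is, the zeros of F occur in pairs symmetric with respect to reflection in the unit circle. -/
/-! For `|ζ| = 1` we have `conj ζ = ζ⁻¹`, and a direct computation gives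
`ζ / (ζ - 1 / conj t) ^ 2 = conj t ^ 2 * conj (ζ / (ζ - t) ^ 2)`. The weights being real,
summing yields `F (1 / conj t) = conj t ^ 2 * conj (F t)`, so zeros of `F` go to zeros. -/

open Complex ComplexConjugate Finset

theorem div_sub_one_div_conj_sq {ζ t : ℂ} (hζ : ‖ζ‖ = 1) (ht : t ≠ 0) :
    ζ / (ζ - 1 / conj t) ^ 2 = conj t ^ 2 * conj (ζ / (ζ - t) ^ 2) := by
  have hζ₀ : ζ ≠ 0 := norm_ne_zero_iff.mp (by simp [hζ])
  have ht₀ : conj t ≠ 0 := (map_ne_zero _).mpr ht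
  have hsub : ζ⁻¹ - conj t = -(conj t * ζ⁻¹) * (ζ - 1 / conj t) := by
    field_simp
    ring
  rw [map_div₀, map_pow, map_sub, ← inv_eq_conj hζ, hsub, mul_pow, neg_sq, mul_pow,
    div_mul_eq_div_div]
  field_simp

theorem sum_mul_div_sub_one_div_conj_sq {ι : Type*} [Fintype ι] (a : ι → ℝ) (ζ : ι → ℂ)
    (hζ : ∀ k, ‖ζ k‖ = 1) {t : ℂ} (ht : t ≠ 0) :
    ∑ k, (a k : ℂ) * (2 * ζ k) / (ζ k - 1 / conj t) ^ 2
      = conj t ^ 2 * conj (∑ k, (a k : ℂ) * (2 * ζ k) / (ζ k - t) ^ 2) := by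
  rw [map_sum, mul_sum]
  refine sum_congr rfl fun k _ => ?_
  simp only [← mul_assoc, mul_div_assoc, div_sub_one_div_conj_sq (hζ k) ht, map_mul,
    conj_ofReal, map_ofNat]
  ring

theorem sum_poisson_deriv_zeros_symmetric_general
    (n : ℕ)
    (ζ : Fin n → ℂ) (hζ : ∀ k, ‖ζ k‖ = 1)
    (c : Fin n → ℝ)
    (F : ℂ → ℂ)
    (hF : ∀ t : ℂ, F t = ∑ k, (c k : ℂ) * (2 * ζ k) / (ζ k - t) ^ 2)
    (t₀ : ℂ) (ht₀ : t₀ ≠ 0)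
    (hzero : F t₀ = 0) :
    F (1 / starRingEnd ℂ t₀) = 0 := by
  rw [hF, sum_mul_div_sub_one_div_conj_sq c ζ hζ ht₀, ← hF, hzero, map_zero, mul_zero]

theorem sum_poisson_deriv_zeros_symmetric
    (n : ℕ) (hn : 1 ≤ n)
    (ζ : Fin n → ℂ) (hζ : ∀ k, ‖ζ k‖ = 1)
    (hdist : Function.Injective ζ)
    (c : Fin n → ℝ) (hc : ∀ k, 0 < c k)
    (F : ℂ → ℂ)
    (hF : ∀ t : ℂ, F t = ∑ k, (c k : ℂ) * (2 * ζ k) / (ζ k - t) ^ 2)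
    (t₀ : ℂ) (ht₀ : t₀ ≠ 0) (hpole : ∀ k, t₀ ≠ ζ k)
    (hzero : F t₀ = 0) :
    F (1 / starRingEnd ℂ t₀) = 0 :=
  sum_poisson_deriv_zeros_symmetric_general n ζ hζ c F hF t₀ ht₀ hzero
end

section
/- Fix n ≥ 1, distinct points ζ₁,…,ζₙ on the unit circle, and positive reals c₁,…,cₙ. The function g(t) = Σ_{k=1}^n cₖ(ζₖ+t)/(ζₖ−t) has at most n − 1 critical points in the open unit disc, counted with multiplicity. -/
open Complex Finset Metric
open scoped Classical

/-!
With `N = 2 (n - 1)`, `g' = P / ∏ₖ (ζₖ - t)²` for `P = ∑ₖ 2 cₖ ζₖ ∏_{j ≠ k} (ζⱼ - t)²`, a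
nonzero polynomial of degree at most `N`. Since the `cₖ` are real and the `ζₖ` lie on the unit
circle, `P` is self-inversive: `z ^ N * conj (P (1 / conj z)) = μ * P z`. Hence `z ↦ 1 / conj z`
sends the nonzero roots of `P` inside the disc to roots outside it without lowering
multiplicities, while a root of order `m` at `0` lowers the degree of `P` to at most `N - m`.
So at most `N / 2` roots lie in the disc.
-/

open Polynomial ComplexConjugate

namespace Polynomial

section CommSemiring

variable {R : Type*} [CommSemiring R]

theorem reflect_sum {ι : Type*} (N : ℕ) (s : Finset ι) (p : ι → R[X]) :
    reflect N (∑ i ∈ s, p i) = ∑ i ∈ s, reflect N (p i) := by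
  induction s using Finset.cons_induction with
  | empty => simp
  | cons a s ha ih => rw [sum_cons, sum_cons, reflect_add, ih]

theorem reflect_pow {f : R[X]} {N : ℕ} (hf : f.natDegree ≤ N) (m : ℕ) :
    reflect (N * m) (f ^ m) = reflect N f ^ m := by
  induction m with
  | zero => simp
  | succ m ih =>
    rw [pow_succ, pow_succ, mul_add, mul_one,
      reflect_mul _ _ ((natDegree_pow_le_of_le m hf).trans_eq (mul_comm _ _)) hf, ih]

theorem natDegree_reflect_le_sub_of_X_pow_dvd {Q : R[X]} {N m : ℕ} (hQ : Q.natDegree ≤ N)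
    (hdvd : X ^ m ∣ Q) : (reflect N Q).natDegree ≤ N - m := by
  nontriviality R
  obtain ⟨S, rfl⟩ := hdvd
  rcases eq_or_ne S 0 with rfl | hS
  · simp
  rw [natDegree_X_pow_mul (n := m) hS] at hQ
  have hS_le : S.natDegree ≤ N - m := Nat.le_sub_of_add_le hQ
  rw [← Nat.add_sub_cancel' (le_of_add_le_right hQ), reflect_mul _ _ (natDegree_X_pow_le m) hS_le,
    reflect_monomial, revAt_le le_rfl, Nat.sub_self, pow_zero, one_mul, Nat.add_sub_cancel_left]
  exact natDegree_reflect_le.trans (max_le le_rfl hS_le)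

end CommSemiring

theorem natDegree_C_sub_X_le {R : Type*} [Ring R] (a : R) : (C a - X).natDegree ≤ 1 :=
  (natDegree_sub_le _ _).trans (by simp [natDegree_X_le])

section Field

variable {K : Type*} [Field K]

theorem reflect_one_X_sub_C {w : K} (hw : w ≠ 0) :
    reflect 1 (X - C w) = C (-w) * (X - C w⁻¹) := by
  rw [reflect_sub, reflect_one_X, reflect_C, pow_one, mul_sub, ← C_mul, neg_mul,
    mul_inv_cancel₀ hw]
  simp only [C_neg, C_1]
  ring

theorem X_sub_C_pow_dvd_reflect {Q : K[X]} {N m : ℕ} {w : K} (hw : w ≠ 0)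
    (hQ : Q.natDegree ≤ N) (hdvd : (X - C w) ^ m ∣ Q) : (X - C w⁻¹) ^ m ∣ reflect N Q := by
  obtain ⟨S, rfl⟩ := hdvd
  rcases eq_or_ne S 0 with rfl | hS
  · simp
  rw [natDegree_mul (pow_ne_zero _ (X_sub_C_ne_zero w)) hS, natDegree_pow,
    natDegree_X_sub_C, mul_one] at hQ
  have hpow := reflect_pow (natDegree_X_sub_C_le w) m
  rw [one_mul, reflect_one_X_sub_C hw, mul_pow] at hpow
  have hN : N = m + (N - m) := by omega
  have hdeg : ((X - C w) ^ m).natDegree ≤ m := by simp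
  rw [hN, reflect_mul _ _ hdeg (Nat.le_sub_of_add_le' hQ), hpow, mul_assoc]
  exact (dvd_mul_right _ _).mul_left _

end Field

theorem card_roots_filter_ball_eq_rootMultiplicity_zero_add (P : ℂ[X]) :
    Multiset.card (P.roots.filter (· ∈ ball (0 : ℂ) 1)) = P.rootMultiplicity 0 +
      Multiset.card (P.roots.filter fun z => ¬z = 0 ∧ z ∈ ball (0 : ℂ) 1) := by
  have hsplit := Multiset.filter_add_not (fun z => z = 0) (P.roots.filter (· ∈ ball (0 : ℂ) 1))
  rw [Multiset.filter_filter, Multiset.filter_filter] at hsplit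
  have hzero : P.roots.filter (fun z => z = 0 ∧ z ∈ ball (0 : ℂ) 1) = P.roots.filter (0 = ·) :=
    Multiset.filter_congr fun z _ =>
      ⟨fun h => h.1.symm, fun h => ⟨h.symm, h ▸ mem_ball_self one_pos⟩⟩
  rw [← hsplit, Multiset.card_add, hzero, ← Multiset.count_eq_card_filter_eq, count_roots]

end Polynomial

namespace Multiset

variable {α : Type*} {s : Multiset α} {p q : α → Prop} [DecidablePred p] [DecidablePred q]

theorem card_filter_add_card_filter_le (h : ∀ a ∈ s, p a → ¬q a) :
    card (s.filter p) + card (s.filter q) ≤ card s := by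
  have hpq : s.filter (fun a => p a ∧ q a) = 0 :=
    filter_eq_nil.2 fun a ha hpq => h a ha hpq.1 hpq.2
  rw [← card_add, filter_add_filter, hpq, Multiset.add_zero]
  exact card_le_card (filter_le _ _)

theorem card_filter_le_card_filter_of_injective [DecidableEq α] {f : α → α}
    (hf : Function.Injective f) (h : ∀ a, p a → q (f a) ∧ s.count a ≤ s.count (f a)) :
    card (s.filter p) ≤ card (s.filter q) := by
  rw [← card_map f]
  refine card_le_card (le_iff_count.2 fun b => ?_)
  by_cases hb : ∃ a, f a = b
  · obtain ⟨a, rfl⟩ := hb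
    rw [count_map_eq_count' f _ hf, count_filter, count_filter]
    split_ifs with hpa hqa
    · exact (h a hpa).2
    · exact absurd (h a hpa).1 hqa
    all_goals exact Nat.zero_le _
  · rw [count_eq_zero.2 fun hmem => ?_]
    · exact Nat.zero_le _
    obtain ⟨a, -, rfl⟩ := mem_map.1 hmem
    exact hb ⟨a, rfl⟩

end Multiset

/-- `reflect N (P.map conj) = C μ * P` says `z ^ N * conj (P (1 / conj z)) = μ * P z`. -/
def IsSelfInversive (N : ℕ) (μ : ℂ) (P : ℂ[X]) : Prop :=
  reflect N (P.map (starRingEnd ℂ)) = C μ * P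

namespace IsSelfInversive

variable {N M : ℕ} {μ ν : ℂ} {P Q : ℂ[X]}

theorem mul (hP : IsSelfInversive N μ P) (hQ : IsSelfInversive M ν Q) (hPN : P.natDegree ≤ N)
    (hQM : Q.natDegree ≤ M) : IsSelfInversive (N + M) (μ * ν) (P * Q) := by
  rw [IsSelfInversive, Polynomial.map_mul, reflect_mul _ _ ((natDegree_map _).trans_le hPN)
    ((natDegree_map _).trans_le hQM), hP, hQ, C_mul]
  ring

theorem prod {ι : Type*} {s : Finset ι} {N : ι → ℕ} {μ : ι → ℂ} {P : ι → ℂ[X]}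
    (h : ∀ i ∈ s, IsSelfInversive (N i) (μ i) (P i)) (hd : ∀ i ∈ s, (P i).natDegree ≤ N i) :
    IsSelfInversive (∑ i ∈ s, N i) (∏ i ∈ s, μ i) (∏ i ∈ s, P i) := by
  induction s using Finset.cons_induction with
  | empty => simp [IsSelfInversive]
  | cons a s ha ih =>
    rw [sum_cons, prod_cons, prod_cons]
    refine (h a (mem_cons_self a s)).mul
      (ih (fun i hi => h i (mem_cons_of_mem hi)) fun i hi => hd i (mem_cons_of_mem hi))
      (hd a (mem_cons_self a s)) ?_
    exact (natDegree_prod_le _ _).trans (sum_le_sum fun i hi => hd i (mem_cons_of_mem hi))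

theorem sum {ι : Type*} {s : Finset ι} {P : ι → ℂ[X]}
    (h : ∀ i ∈ s, IsSelfInversive N μ (P i)) : IsSelfInversive N μ (∑ i ∈ s, P i) := by
  rw [IsSelfInversive, Polynomial.map_sum, reflect_sum, mul_sum]
  exact sum_congr rfl h

theorem ne_zero (h : IsSelfInversive N μ P) (hP : P ≠ 0) : μ ≠ 0 := by
  rintro rfl
  rw [IsSelfInversive, C_0, zero_mul, reflect_eq_zero_iff, Polynomial.map_eq_zero] at h
  exact hP h

theorem natDegree_le_sub_rootMultiplicity_zero (h : IsSelfInversive N μ P) (hP : P ≠ 0)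
    (hd : P.natDegree ≤ N) : P.natDegree ≤ N - P.rootMultiplicity 0 := by
  have hdvd : X ^ P.rootMultiplicity 0 ∣ P.map (starRingEnd ℂ) := by
    simpa using Polynomial.map_dvd (starRingEnd ℂ) (pow_rootMultiplicity_dvd P 0)
  have := natDegree_reflect_le_sub_of_X_pow_dvd ((natDegree_map _).trans_le hd) hdvd
  rwa [h, natDegree_C_mul (h.ne_zero hP)] at this

theorem rootMultiplicity_le (h : IsSelfInversive N μ P) (hP : P ≠ 0) (hd : P.natDegree ≤ N)
    {z : ℂ} (hz : z ≠ 0) : P.rootMultiplicity z ≤ P.rootMultiplicity (conj z)⁻¹ := by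
  have hdvd : (X - C (conj z)) ^ P.rootMultiplicity z ∣ P.map (starRingEnd ℂ) := by
    simpa using Polynomial.map_dvd (starRingEnd ℂ) (pow_rootMultiplicity_dvd P z)
  have := X_sub_C_pow_dvd_reflect ((_root_.map_ne_zero _).2 hz)
    ((natDegree_map _).trans_le hd) hdvd
  rw [h] at this
  exact (le_rootMultiplicity_iff hP).2
    ((IsUnit.dvd_mul_left (isUnit_C.2 (h.ne_zero hP).isUnit)).1 this)

theorem two_mul_card_roots_filter_ball_le (h : IsSelfInversive N μ P) (hP : P ≠ 0)
    (hd : P.natDegree ≤ N) : 2 * Multiset.card (P.roots.filter (· ∈ ball (0 : ℂ) 1)) ≤ N := by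
  have hpair : Multiset.card (P.roots.filter fun z => ¬z = 0 ∧ z ∈ ball (0 : ℂ) 1) ≤
      Multiset.card (P.roots.filter fun z => 1 < ‖z‖) := by
    refine Multiset.card_filter_le_card_filter_of_injective (f := fun z => (conj z)⁻¹)
      (inv_injective.comp (star_injective (R := ℂ))) fun z ⟨hz0, hz1⟩ => ⟨?_, ?_⟩
    · rw [mem_ball_zero_iff] at hz1
      rw [norm_inv, Complex.norm_conj]
      exact (one_lt_inv₀ (norm_pos_iff.2 hz0)).2 hz1
    · rw [count_roots, count_roots]
      exact h.rootMultiplicity_le hP hd hz0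
  have hdisj : Multiset.card (P.roots.filter (· ∈ ball (0 : ℂ) 1)) +
      Multiset.card (P.roots.filter fun z => 1 < ‖z‖) ≤ Multiset.card P.roots :=
    Multiset.card_filter_add_card_filter_le fun z _ hz => by
      rw [mem_ball_zero_iff] at hz
      exact hz.le.not_gt
  have hroots := card_roots' P
  have hdeg := h.natDegree_le_sub_rootMultiplicity_zero hP hd
  have hball := card_roots_filter_ball_eq_rootMultiplicity_zero_add P
  omega

end IsSelfInversive

theorem isSelfInversive_C_sub_X {a : ℂ} (ha : ‖a‖ = 1) :
    IsSelfInversive 1 (-conj a) (C a - X) := by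
  have hconj : conj a * a = 1 := by rw [conj_mul', ha]; norm_num
  rw [IsSelfInversive, Polynomial.map_sub, map_C, Polynomial.map_X, reflect_sub, reflect_C,
    reflect_one_X, pow_one, mul_sub, ← C_mul, neg_mul, hconj]
  simp only [C_neg, C_1]
  ring

theorem isSelfInversive_C_sub_X_sq {a : ℂ} (ha : ‖a‖ = 1) :
    IsSelfInversive 2 (conj a ^ 2) ((C a - X) ^ 2) := by
  have h := isSelfInversive_C_sub_X ha
  simpa [sq] using h.mul h (natDegree_C_sub_X_le a) (natDegree_C_sub_X_le a)

theorem isSelfInversive_C_ofReal_mul {a : ℂ} (ha : ‖a‖ = 1) (r : ℝ) :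
    IsSelfInversive 0 (conj a ^ 2) (C (r * a)) := by
  have hconj : conj a * a = 1 := by rw [conj_mul', ha]; norm_num
  rw [IsSelfInversive, map_C, reflect_C, pow_zero, mul_one, ← C_mul, map_mul, conj_ofReal]
  congr 1
  linear_combination -(r * conj a) * hconj

section PoissonSum

variable {ι : Type*} [Fintype ι] [DecidableEq ι] (ζ : ι → ℂ) (c : ι → ℝ)

noncomputable def poissonSumDerivNumerator : ℂ[X] :=
  ∑ k, C (2 * c k * ζ k) * ∏ j ∈ univ.erase k, (C (ζ j) - X) ^ 2

theorem eval_poissonSumDerivNumerator (t : ℂ) :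
    (poissonSumDerivNumerator ζ c).eval t =
      ∑ k, 2 * c k * ζ k * ∏ j ∈ univ.erase k, (ζ j - t) ^ 2 := by
  simp [poissonSumDerivNumerator, eval_finsetSum, eval_prod]

theorem hasDerivAt_poissonSum {t : ℂ} (hζt : ∀ k, ζ k ≠ t) :
    HasDerivAt (fun s => ∑ k, (c k : ℂ) * (ζ k + s) / (ζ k - s))
      ((poissonSumDerivNumerator ζ c).eval t / ∏ k, (ζ k - t) ^ 2) t := by
  have hterm : ∀ k, HasDerivAt (fun s => (c k : ℂ) * (ζ k + s) / (ζ k - s))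
      (2 * c k * ζ k / (ζ k - t) ^ 2) t := fun k => by
    have hnum := ((hasDerivAt_id' t).const_add (ζ k)).const_mul (c k : ℂ)
    have hden := (hasDerivAt_id' t).const_sub (ζ k)
    refine (hnum.fun_div hden (sub_ne_zero.2 (hζt k))).congr_deriv ?_
    ring
  refine (HasDerivAt.fun_sum fun k _ => hterm k).congr_deriv ?_
  rw [eval_poissonSumDerivNumerator, sum_div]
  refine sum_congr rfl fun k _ => ?_
  have hrest : ∏ j ∈ univ.erase k, (ζ j - t) ^ 2 ≠ 0 :=
    prod_ne_zero_iff.2 fun j _ => pow_ne_zero _ (sub_ne_zero.2 (hζt j))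
  rw [← mul_prod_erase univ (fun j => (ζ j - t) ^ 2) (mem_univ k), mul_div_mul_right _ _ hrest]

theorem poissonSumDerivNumerator_ne_zero (hζ : Function.Injective ζ) {k : ι} (hck : c k ≠ 0)
    (hζk : ζ k ≠ 0) : poissonSumDerivNumerator ζ c ≠ 0 := by
  intro h0
  have heval := congrArg (eval (ζ k)) h0
  rw [eval_poissonSumDerivNumerator, eval_zero,
    sum_eq_single k (fun j _ hjk => ?_) (fun hk => absurd (mem_univ k) hk)] at heval
  · refine mul_ne_zero (by simp [hck, hζk]) (prod_ne_zero_iff.2 fun j hj => ?_) heval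
    exact pow_ne_zero _ (sub_ne_zero.2 (hζ.ne (ne_of_mem_erase hj)))
  · exact mul_eq_zero_of_right _ (prod_eq_zero (mem_erase.2 ⟨Ne.symm hjk, mem_univ k⟩) (by simp))

theorem natDegree_prod_erase_C_sub_X_sq_le (k : ι) :
    (∏ j ∈ univ.erase k, (C (ζ j) - X) ^ 2).natDegree ≤ ∑ _j ∈ univ.erase k, 2 :=
  (natDegree_prod_le _ _).trans
    (sum_le_sum fun j _ => natDegree_pow_le_of_le 2 (natDegree_C_sub_X_le (ζ j)))

theorem sum_univ_erase_two (k : ι) : ∑ _j ∈ univ.erase k, 2 = 2 * (Fintype.card ι - 1) := by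
  rw [sum_const, card_erase_of_mem (mem_univ k), card_univ, smul_eq_mul, mul_comm]

theorem natDegree_poissonSumDerivNumerator_le :
    (poissonSumDerivNumerator ζ c).natDegree ≤ 2 * (Fintype.card ι - 1) :=
  natDegree_sum_le_of_forall_le _ _ fun k _ => (natDegree_C_mul_le _ _).trans
    ((natDegree_prod_erase_C_sub_X_sq_le ζ k).trans_eq (sum_univ_erase_two k))

theorem isSelfInversive_poissonSumDerivNumerator (hζ : ∀ k, ‖ζ k‖ = 1) :
    IsSelfInversive (2 * (Fintype.card ι - 1)) (∏ j, conj (ζ j) ^ 2)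
      (poissonSumDerivNumerator ζ c) := by
  refine IsSelfInversive.sum fun k _ => ?_
  have hC := isSelfInversive_C_ofReal_mul (hζ k) (2 * c k)
  push_cast at hC
  have hprod := IsSelfInversive.prod (s := univ.erase k)
    (fun j _ => isSelfInversive_C_sub_X_sq (hζ j))
    (fun j _ => natDegree_pow_le_of_le 2 (natDegree_C_sub_X_le (ζ j)))
  have := hC.mul hprod (natDegree_C _).le (natDegree_prod_erase_C_sub_X_sq_le ζ k)
  rwa [zero_add, sum_univ_erase_two,
    mul_prod_erase univ (fun j => conj (ζ j) ^ 2) (mem_univ k)] at this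

end PoissonSum

theorem sum_poisson_at_most_n_sub_one_critical_points
    (n : ℕ) (hn : 1 ≤ n)
    (ζ : Fin n → ℂ) (hζ : ∀ k, ‖ζ k‖ = 1)
    (hdist : Function.Injective ζ)
    (c : Fin n → ℝ) (hc : ∀ k, 0 < c k)
    (g : ℂ → ℂ)
    (hg : ∀ t : ℂ, g t = ∑ k, (c k : ℂ) * (ζ k + t) / (ζ k - t)) :
    ∃ P : Polynomial ℂ, P ≠ 0 ∧
      (∀ t ∈ ball (0 : ℂ) 1,
        deriv g t = P.eval t / ∏ k, (ζ k - t) ^ 2) ∧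
      Multiset.card (P.roots.filter (fun z => z ∈ ball (0 : ℂ) 1)) ≤ n - 1 := by
  have hP : poissonSumDerivNumerator ζ c ≠ 0 :=
    poissonSumDerivNumerator_ne_zero ζ c hdist (hc ⟨0, hn⟩).ne'
      (norm_ne_zero_iff.1 (by rw [hζ]; exact one_ne_zero))
  refine ⟨poissonSumDerivNumerator ζ c, hP, fun t ht => ?_, ?_⟩
  · have hζt : ∀ k, ζ k ≠ t := fun k hk => by
      rw [mem_ball_zero_iff, ← hk, hζ k] at ht
      exact lt_irrefl _ ht
    rw [show g = _ from funext hg, (hasDerivAt_poissonSum ζ c hζt).deriv]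
  · have hcount := IsSelfInversive.two_mul_card_roots_filter_ball_le
      (isSelfInversive_poissonSumDerivNumerator ζ c hζ) hP
      (natDegree_poissonSumDerivNumerator_le ζ c)
    rw [Fintype.card_fin] at hcount
    omega
end
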